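/- arXiv:2509.17852 — 6 statements merged into one kernel-verified Lean document; each statement's English description precedes it below -/
import Mathlib

section
/- With I_n and S_n as defined (I_n(f) = t^n f(1/t), S_n(f) = (I_n(f)-f)/(t-1)), for any polynomial f of degree at most n one has S_n(S_n(f)) = S_n(f), I_n(S_{n+1}(f)) = S_{n+1}(f), and S_{n+1}(S_n(f)) = (1+t)·S_n(f). -/
/-!
Write `g = S_n f`. Since `f(1) = (I_n f)(1)`, the division is exact: `(t - 1) g = I_n f - f`, and
`g` has degree at most `n - 1`. Reflecting this identity in degree `n + 1`, where
`I_{n+1} = t · I_n` on polynomials of degree at most `n`, negates its right-hand side and turns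
`t - 1` into `1 - t`; cancelling `t - 1` gives `I_n g = t g`. All three claims follow from this:
`I_n g - g = (t - 1) g` and `I_{n+1} g - g = t² g - g = (t - 1)(1 + t) g`, while for `S_{n+1} f`
the same identity reads `t · I_n (S_{n+1} f) = t · S_{n+1} f`.
-/

open Polynomial

/-- `Spoly n f = (Iₙ(f) - f)/(t-1)` where `Iₙ(f)(t) = tⁿ f(1/t)` is the reversal. -/
noncomputable def Spoly {R : Type*} [CommRing R] (n : ℕ) (f : R[X]) : R[X] :=
  (reflect n f - f) /ₘ (X - C 1)

namespace Polynomial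

theorem reflect_succ_of_natDegree_le {R : Type*} [Semiring R] {n : ℕ} {p : R[X]}
    (hp : p.natDegree ≤ n) : reflect (n + 1) p = X * reflect n p := by
  have h1 : (1 : R[X]).natDegree ≤ 1 := natDegree_one.trans_le zero_le_one
  simpa [add_comm, reflect_one] using reflect_mul 1 p h1 hp

theorem natDegree_reflect_le_of_le {R : Type*} [Semiring R] {n : ℕ} {p : R[X]}
    (hp : p.natDegree ≤ n) : (reflect n p).natDegree ≤ n :=
  natDegree_reflect_le.trans (max_le le_rfl hp)

theorem eval_one_reflect {R : Type*} [CommSemiring R] {n : ℕ} {p : R[X]}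
    (hp : p.natDegree ≤ n) : eval 1 (reflect n p) = eval 1 p := by
  let : Invertible (1 : R) := invertibleOne
  have h := eval₂_reflect_mul_pow (RingHom.id R) (1 : R) n p hp
  simp only [invOf_one, one_pow, mul_one] at h
  exact h

end Polynomial

section Spoly

variable {R : Type*} [CommRing R] {n : ℕ} {f : R[X]}

theorem X_sub_one_mul_Spoly (hf : f.natDegree ≤ n) :
    (X - C 1) * Spoly n f = reflect n f - f := by
  rw [Spoly, mul_divByMonic_eq_iff_isRoot]
  simp [eval_one_reflect hf]

theorem Spoly_eq_of_reflect_sub_eq {g : R[X]} (h : reflect n f - f = (X - C 1) * g) :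
    Spoly n f = g := by
  rw [Spoly, h, mul_divByMonic_cancel_left _ (monic_X_sub_C 1)]

theorem natDegree_Spoly_le (hf : f.natDegree ≤ n) : (Spoly n f).natDegree ≤ n - 1 := by
  nontriviality R
  have h : (reflect n f - f).natDegree ≤ n :=
    (natDegree_sub_le _ _).trans (max_le (natDegree_reflect_le_of_le hf) hf)
  rw [Spoly, natDegree_divByMonic _ (monic_X_sub_C 1), natDegree_X_sub_C]
  omega

theorem reflect_Spoly (hf : f.natDegree ≤ n) : reflect n (Spoly n f) = X * Spoly n f := by
  set g := Spoly n f
  have hg : g.natDegree ≤ n := (natDegree_Spoly_le hf).trans (Nat.sub_le n 1)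
  have hmul : (X - C 1) * g = reflect n f - f := X_sub_one_mul_Spoly hf
  have hX : (X - C (1 : R)).natDegree ≤ 1 := natDegree_X_sub_C_le 1
  have hleft : reflect (n + 1) ((X - C 1) * g) = (1 - X) * reflect n g := by
    rw [add_comm n 1, reflect_mul _ _ hX hg, reflect_sub, reflect_one_X, reflect_C, pow_one, C_1,
      one_mul]
  have hright : reflect (n + 1) ((X - C 1) * g) = X * f - X * reflect n f := by
    rw [hmul, reflect_sub, reflect_succ_of_natDegree_le (natDegree_reflect_le_of_le hf),
      reflect_succ_of_natDegree_le hf, reflect_reflect]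
  apply (monic_X_sub_C (1 : R)).isRegular.left
  rw [C_1] at hmul ⊢
  linear_combination hleft - hright - X * hmul

end Spoly

theorem stmt1 {R : Type*} [CommRing R] (n : ℕ) (f : R[X]) (hf : f.natDegree ≤ n) :
    Spoly n (Spoly n f) = Spoly n f ∧
    reflect n (Spoly (n + 1) f) = Spoly (n + 1) f ∧
    Spoly (n + 1) (Spoly n f) = (1 + X) * Spoly n f := by
  set g := Spoly n f
  have hg : g.natDegree ≤ n := (natDegree_Spoly_le hf).trans (Nat.sub_le n 1)
  have hgX : reflect n g = X * g := reflect_Spoly hf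
  have hf' : f.natDegree ≤ n + 1 := hf.trans n.le_succ
  refine ⟨?_, ?_, ?_⟩
  · apply Spoly_eq_of_reflect_sub_eq
    rw [hgX, C_1]
    ring
  · have h := reflect_Spoly hf'
    rw [reflect_succ_of_natDegree_le (by simpa using natDegree_Spoly_le hf')] at h
    exact isRegular_X.left h
  · apply Spoly_eq_of_reflect_sub_eq
    rw [reflect_succ_of_natDegree_le hg, hgX, C_1]
    ring
end

section
/- Let R = (r_{n,k})_{0≤k≤n≤N} be a lower triangular matrix with entries in an integral domain with all diagonal entries r_{n,n} = 1. Then there exists a unique family of polynomials (d_n)_{n=0}^N such that d_0 = 1, each d_n is palindromic with I_n(d_n) = d_n, and the polynomials H_n := Σ_{k=0}^n r_{n,k} d_k satisfy I_n(H_n) = t·H_n for all 1 ≤ n ≤ N. Moreover the d_n satisfy the recursion d_n = t·S_{n-1}(Σ_{k=0}^{n-1} r_{n,k} d_k) for n ≥ 1. -/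
/-!
Since `X - 1` is monic, an `n`-palindromic polynomial `p` with `Iₙ(p) = X * p` satisfies
`(X - 1) * p = 0`, hence `p = 0`; as `r n n = 1`, the Chow conditions for two families differ at
step `n` exactly by such a `p = dₙ - d'ₙ`, which gives uniqueness by strong induction.

For existence, if `natDegree g ≤ m` then `g` and `Iₘ(g)` agree at `1`, so `X - 1` divides
`Iₘ(g) - g` and `s = Sₘ(g)` has degree `≤ m - 1`. Reflecting `(X - 1) * s = Iₘ(g) - g` shows
that `s` is `(m - 1)`-palindromic, so `d = X * s` is `(m + 1)`-palindromic, and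
`I_{m+1}(g + d) = X * (g + (X - 1) * s) + X * s = X * (g + d)`.
-/

open Polynomial

/-- `d` is a family of Chow-derangement polynomials for the lower triangular matrix
`r` (up to index `N`): `d 0 = 1`, each `d n` is palindromic (`Iₙ(dₙ) = dₙ`), and
the Chow polynomials `Hₙ = Σ_{k≤n} r n k • d k` satisfy `Iₙ(Hₙ) = t·Hₙ` for `1 ≤ n ≤ N`. -/
def ChowDerFamily {R : Type*} [CommRing R] (N : ℕ) (r : ℕ → ℕ → R) (d : ℕ → R[X]) : Prop :=
  d 0 = 1 ∧
  (∀ n ≤ N, (d n).natDegree ≤ n) ∧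
  (∀ n ≤ N, reflect n (d n) = d n) ∧
  (∀ n, 1 ≤ n → n ≤ N →
    reflect n (∑ k ∈ Finset.range (n + 1), C (r n k) * d k) =
      X * ∑ k ∈ Finset.range (n + 1), C (r n k) * d k)

open Finset

namespace Polynomial

variable {R : Type*}

section Semiring

variable [Semiring R]

lemma reflect_zero_eq_self (f : R[X]) : reflect 0 f = f := by
  ext i
  rcases Nat.eq_zero_or_pos i with rfl | hi
  · simp
  · rw [coeff_reflect, revAt_eq_self_of_lt hi]

lemma reflect_succ_eq_X_mul {m : ℕ} {f : R[X]} (hf : f.natDegree ≤ m) :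
    reflect (m + 1) f = X * reflect m f := by
  simpa [reflect_one, add_comm] using
    reflect_mul (1 : R[X]) f (natDegree_one.trans_le zero_le_one) hf

end Semiring

lemma eval_one_reflect_s2 [CommSemiring R] {N : ℕ} {f : R[X]} (hf : f.natDegree ≤ N) :
    (reflect N f).eval 1 = f.eval 1 := by
  let _ := invertibleOne (α := R)
  simpa using eval₂_reflect_mul_pow (RingHom.id R) (1 : R) N f hf

lemma eq_zero_of_reflect_eq_self_of_reflect_eq_X_mul [Ring R] {n : ℕ} {p : R[X]}
    (hpal : reflect n p = p) (hX : reflect n p = X * p) : p = 0 := by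
  have hp : (X - C 1) * p = 0 := by rw [sub_mul, ← hX, hpal, C_1, one_mul, sub_self]
  exact (monic_X_sub_C 1).mul_right_eq_zero_iff.mp hp

end Polynomial

section Spoly

variable {R : Type*} [CommRing R] {m : ℕ} {g : R[X]}

lemma spoly_zero_left (g : R[X]) : Spoly 0 g = 0 := by
  rw [Spoly, reflect_zero_eq_self, sub_self, zero_divByMonic]

lemma X_sub_C_one_mul_spoly (hg : g.natDegree ≤ m) :
    (X - C 1) * Spoly m g = reflect m g - g := by
  have h := modByMonic_add_div (reflect m g - g) (X - C (1 : R))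
  rwa [modByMonic_X_sub_C_eq_C_eval, eval_sub, eval_one_reflect_s2 hg, sub_self, C_0,
    zero_add] at h

lemma natDegree_spoly_le (hg : g.natDegree ≤ m) : (Spoly m g).natDegree ≤ m - 1 := by
  nontriviality R
  have h : (reflect m g - g).natDegree ≤ m :=
    (natDegree_sub_le _ _).trans (max_le (natDegree_reflect_le.trans (max_le le_rfl hg)) hg)
  rw [Spoly, natDegree_divByMonic _ (monic_X_sub_C 1), natDegree_X_sub_C]
  omega

lemma reflect_pred_spoly (hg : g.natDegree ≤ m) : reflect (m - 1) (Spoly m g) = Spoly m g := by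
  cases m with
  | zero => rw [spoly_zero_left, reflect_zero]
  | succ n =>
    set s := Spoly (n + 1) g
    show reflect n s = s
    have hsdeg : s.natDegree ≤ n := natDegree_spoly_le hg
    have hs : (X - C 1) * s = reflect (n + 1) g - g := X_sub_C_one_mul_spoly hg
    have hrefl : reflect (1 + n) ((X - C 1) * s) = -(X - C 1) * reflect n s := by
      rw [reflect_mul _ _ (natDegree_X_sub_C_le 1) hsdeg, reflect_sub,
        reflect_C, reflect_one_X, C_1]
      ring
    have hanti : reflect (n + 1) (reflect (n + 1) g - g) = -(reflect (n + 1) g - g) := by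
      rw [reflect_sub, reflect_reflect, neg_sub]
    rw [add_comm 1 n, hs, hanti, ← hs, neg_mul, neg_inj] at hrefl
    exact ((monic_X_sub_C (1 : R)).isRegular.left hrefl).symm

lemma reflect_spoly (hg : g.natDegree ≤ m) : reflect m (Spoly m g) = X * Spoly m g := by
  cases m with
  | zero => rw [spoly_zero_left, reflect_zero, mul_zero]
  | succ n =>
    have hs : (Spoly (n + 1) g).natDegree ≤ n := natDegree_spoly_le hg
    rw [reflect_succ_eq_X_mul hs]
    exact congrArg (X * ·) (reflect_pred_spoly hg)

lemma natDegree_X_mul_spoly_le (hg : g.natDegree ≤ m) : (X * Spoly m g).natDegree ≤ m + 1 :=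
  natDegree_mul_le.trans <| by
    have := natDegree_spoly_le hg
    have := natDegree_X_le (R := R)
    omega

lemma reflect_X_mul_spoly (hg : g.natDegree ≤ m) :
    reflect (m + 1) (X * Spoly m g) = X * Spoly m g := by
  rw [add_comm, reflect_mul _ _ natDegree_X_le ((natDegree_spoly_le hg).trans (m.sub_le 1)),
    reflect_one_X, one_mul, reflect_spoly hg]

lemma reflect_add_X_mul_spoly (hg : g.natDegree ≤ m) :
    reflect (m + 1) (g + X * Spoly m g) = X * (g + X * Spoly m g) := by
  have hrefl : reflect m g = g + (X - C 1) * Spoly m g := by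
    rw [X_sub_C_one_mul_spoly hg, add_sub_cancel]
  rw [reflect_add, reflect_X_mul_spoly hg, reflect_succ_eq_X_mul hg, hrefl, C_1]
  ring

end Spoly

section ChowDerangement

variable {R : Type*} [CommRing R]

lemma natDegree_sum_range_C_mul_le (c : ℕ → R) {d : ℕ → R[X]} {m : ℕ}
    (hd : ∀ k ≤ m, (d k).natDegree ≤ k) :
    (∑ k ∈ range (m + 1), C (c k) * d k).natDegree ≤ m :=
  natDegree_sum_le_of_forall_le _ _ fun k hk =>
    (natDegree_C_mul_le _ _).trans ((hd k (Nat.lt_succ_iff.mp (mem_range.mp hk))).trans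
      (Nat.lt_succ_iff.mp (mem_range.mp hk)))

lemma sum_range_succ_C_mul_of_eq_one {c : ℕ → R} {n : ℕ} (hc : c n = 1) (d : ℕ → R[X]) :
    ∑ k ∈ range (n + 1), C (c k) * d k = ∑ k ∈ range n, C (c k) * d k + d n := by
  rw [sum_range_succ, hc, C_1, one_mul]

variable (r : ℕ → ℕ → R)

noncomputable def chowDerangement : ℕ → R[X]
  | 0 => 1
  | n + 1 => X * Spoly n (∑ k ∈ (range (n + 1)).attach, C (r (n + 1) k) * chowDerangement k)
  termination_by n => n
  decreasing_by exact mem_range.mp k.2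

lemma chowDerangement_zero : chowDerangement r 0 = 1 := by
  rw [chowDerangement]

lemma chowDerangement_succ (n : ℕ) :
    chowDerangement r (n + 1) =
      X * Spoly n (∑ k ∈ range (n + 1), C (r (n + 1) k) * chowDerangement r k) := by
  rw [chowDerangement, ← sum_attach (range (n + 1))]

lemma natDegree_chowDerangement_le (n : ℕ) : (chowDerangement r n).natDegree ≤ n := by
  induction n using Nat.strong_induction_on with
  | _ n ih =>
    cases n with
    | zero => simp [chowDerangement_zero]
    | succ m =>
      rw [chowDerangement_succ]
      exact natDegree_X_mul_spoly_le
        (natDegree_sum_range_C_mul_le _ fun k hk => ih k (Nat.lt_succ_of_le hk))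

lemma natDegree_sum_range_C_mul_chowDerangement_le (c : ℕ → R) (m : ℕ) :
    (∑ k ∈ range (m + 1), C (c k) * chowDerangement r k).natDegree ≤ m :=
  natDegree_sum_range_C_mul_le c fun k _ => natDegree_chowDerangement_le r k

lemma reflect_chowDerangement (n : ℕ) :
    reflect n (chowDerangement r n) = chowDerangement r n := by
  cases n with
  | zero => rw [chowDerangement_zero, reflect_one, pow_zero]
  | succ m =>
    rw [chowDerangement_succ]
    exact reflect_X_mul_spoly (natDegree_sum_range_C_mul_chowDerangement_le r _ m)

lemma chowDerFamily_chowDerangement {N : ℕ} (hdiag : ∀ n ≤ N, r n n = 1) :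
    ChowDerFamily N r (chowDerangement r) := by
  refine ⟨chowDerangement_zero r, fun n _ => natDegree_chowDerangement_le r n,
    fun n _ => reflect_chowDerangement r n, fun n hn hN => ?_⟩
  obtain ⟨m, rfl⟩ := Nat.exists_eq_add_of_le' hn
  rw [sum_range_succ_C_mul_of_eq_one (hdiag _ hN), chowDerangement_succ]
  exact reflect_add_X_mul_spoly (natDegree_sum_range_C_mul_chowDerangement_le r _ m)

end ChowDerangement

theorem ChowDerFamily.eq {R : Type*} [CommRing R] {N : ℕ} {r : ℕ → ℕ → R}
    {d d' : ℕ → R[X]} (hdiag : ∀ n ≤ N, r n n = 1) (hd : ChowDerFamily N r d)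
    (hd' : ChowDerFamily N r d') :
    ∀ n ≤ N, d n = d' n := by
  intro n
  induction n using Nat.strong_induction_on with
  | _ n ih =>
    intro hN
    obtain ⟨hd0, -, hpal, hchow⟩ := hd
    obtain ⟨hd0', -, hpal', hchow'⟩ := hd'
    cases n with
    | zero => rw [hd0, hd0']
    | succ m =>
      have hlower : ∑ k ∈ range (m + 1), C (r (m + 1) k) * d k =
          ∑ k ∈ range (m + 1), C (r (m + 1) k) * d' k :=
        sum_congr rfl fun k hk => by
          have hkm := mem_range.mp hk
          rw [ih k hkm (by omega)]
      have hchow_sub := congrArg₂ (· - ·) (hchow _ (by omega) hN) (hchow' _ (by omega) hN)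
      simp only [sum_range_succ_C_mul_of_eq_one (hdiag _ hN), hlower, ← reflect_sub, ← mul_sub,
        add_sub_add_left_eq_sub] at hchow_sub
      rw [← sub_eq_zero]
      refine eq_zero_of_reflect_eq_self_of_reflect_eq_X_mul ?_ hchow_sub
      rw [reflect_sub, hpal _ hN, hpal' _ hN]

theorem stmt2_general {R : Type*} [CommRing R] (N : ℕ) (r : ℕ → ℕ → R)
    (hdiag : ∀ n ≤ N, r n n = 1) :
    (∃ d : ℕ → R[X], ChowDerFamily N r d ∧
      ∀ n, 1 ≤ n → n ≤ N →
        d n = X * Spoly (n - 1) (∑ k ∈ Finset.range n, C (r n k) * d k)) ∧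
    (∀ d d' : ℕ → R[X], ChowDerFamily N r d → ChowDerFamily N r d' →
      ∀ n ≤ N, d n = d' n) := by
  refine ⟨⟨chowDerangement r, chowDerFamily_chowDerangement r hdiag, fun n hn _ => ?_⟩,
    fun d d' hd hd' => hd.eq hdiag hd'⟩
  obtain ⟨m, rfl⟩ := Nat.exists_eq_add_of_le' hn
  exact chowDerangement_succ r m

theorem stmt2 {R : Type*} [CommRing R] [IsDomain R] (N : ℕ) (r : ℕ → ℕ → R)
    (htri : ∀ n k, n < k → r n k = 0) (hdiag : ∀ n ≤ N, r n n = 1) :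
    (∃ d : ℕ → R[X], ChowDerFamily N r d ∧
      ∀ n, 1 ≤ n → n ≤ N →
        d n = X * Spoly (n - 1) (∑ k ∈ Finset.range n, C (r n k) * d k)) ∧
    (∀ d d' : ℕ → R[X], ChowDerFamily N r d → ChowDerFamily N r d' →
      ∀ n ≤ N, d n = d' n) :=
  stmt2_general N r hdiag
end

section
/- Let R = (r_{n,k}) be a lower triangular matrix over a field K with all diagonal entries equal to 1, and let (c_n) be a sequence of nonzero elements of K with c_0 = 1. Define R' = (r_{n,k}·c_n·c_k^{-1}). Then the Chow polynomials and Chow-derangement polynomials scale: d_n[R'] = c_n·d_n[R] and H_n[R'] = c_n·H_n[R] for all n. -/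
open Polynomial

/-- `d`, `H` are the Chow-derangement and Chow polynomials of the lower triangular
matrix `r` with unit diagonal: `d 0 = 1`, `Iₙ(dₙ) = dₙ`, `Hₙ = Σ_{k≤n} r n k • d k`,
and `Iₙ(Hₙ) = t·Hₙ` for `n ≥ 1`. -/
def ChowPairAll {K : Type*} [CommRing K] (r : ℕ → ℕ → K) (d H : ℕ → K[X]) : Prop :=
  d 0 = 1 ∧
  (∀ n, (d n).natDegree ≤ n) ∧
  (∀ n, reflect n (d n) = d n) ∧
  (∀ n, H n = ∑ k ∈ Finset.range (n + 1), C (r n k) * d k) ∧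
  (∀ n, 1 ≤ n → reflect n (H n) = X * H n)

lemma chow_unique {K : Type*} [Field K] (s : ℕ → ℕ → K) (hdiag : ∀ n, s n n = 1)
    (d₁ H₁ d₂ H₂ : ℕ → K[X]) (h₁ : ChowPairAll s d₁ H₁) (h₂ : ChowPairAll s d₂ H₂) :
    ∀ n, d₁ n = d₂ n := by
  obtain ⟨h10, _, h1r, h1H, h1X⟩ := h₁
  obtain ⟨h20, _, h2r, h2H, h2X⟩ := h₂
  intro n
  induction n using Nat.strong_induction_on with
  | _ n ih =>
    match n with
    | 0 => rw [h10, h20]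
    | Nat.succ m =>
      set n := m + 1 with hn
      have hsum : H₁ n - H₂ n = d₁ n - d₂ n := by
        rw [h1H, h2H, Finset.sum_range_succ _ n, Finset.sum_range_succ _ n]
        have : ∑ k ∈ Finset.range n, C (s n k) * d₁ k
            = ∑ k ∈ Finset.range n, C (s n k) * d₂ k :=
          Finset.sum_congr rfl fun k hk => by rw [ih k (Finset.mem_range.mp hk)]
        rw [this, hdiag, map_one]
        ring
      have hrefl : reflect n (d₁ n - d₂ n) = d₁ n - d₂ n := by
        rw [reflect_sub, h1r, h2r]
      have hXe : d₁ n - d₂ n = X * (d₁ n - d₂ n) := by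
        have := h1X n (Nat.le_add_left 1 m)
        have h2 := h2X n (Nat.le_add_left 1 m)
        calc d₁ n - d₂ n = reflect n (d₁ n - d₂ n) := hrefl.symm
          _ = reflect n (H₁ n - H₂ n) := by rw [hsum]
          _ = X * H₁ n - X * H₂ n := by rw [reflect_sub, this, h2]
          _ = X * (d₁ n - d₂ n) := by rw [← mul_sub, hsum]
      have : (1 - X) * (d₁ n - d₂ n) = 0 := by
        rw [sub_mul, one_mul]
        rw [← hXe]
        ring
      rcases mul_eq_zero.mp this with h | h
      · exfalso
        have : (1 - X : K[X]).coeff 1 = 0 := by rw [h]; simp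
        simp [coeff_one] at this
      · exact sub_eq_zero.mp h

theorem stmt3 {K : Type*} [Field K] (r : ℕ → ℕ → K)
    (htri : ∀ n k, n < k → r n k = 0) (hdiag : ∀ n, r n n = 1)
    (c : ℕ → K) (hc : ∀ n, c n ≠ 0) (hc0 : c 0 = 1)
    (d H d' H' : ℕ → K[X])
    (hdH : ChowPairAll r d H)
    (hdH' : ChowPairAll (fun n k => r n k * c n * (c k)⁻¹) d' H') :
    ∀ n, d' n = C (c n) * d n ∧ H' n = C (c n) * H n := by
  obtain ⟨h0, hdeg, hrefl, hH, hX⟩ := hdH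
  have key : ChowPairAll (fun n k => r n k * c n * (c k)⁻¹)
      (fun n => C (c n) * d n) (fun n => C (c n) * H n) := by
    refine ⟨?_, ?_, ?_, ?_, ?_⟩
    · simp [h0, hc0]
    · intro n
      exact (natDegree_C_mul_le _ _).trans (hdeg n)
    · intro n
      rw [reflect_C_mul, hrefl]
    · intro n
      show C (c n) * H n = _
      rw [hH, Finset.mul_sum]
      refine Finset.sum_congr rfl fun k hk => ?_
      show C (c n) * (C (r n k) * d k) = C (r n k * c n * (c k)⁻¹) * (C (c k) * d k)
      rw [← mul_assoc, ← C_mul, ← mul_assoc, ← C_mul]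
      have : c n * r n k = r n k * c n * (c k)⁻¹ * c k := by
        rw [mul_assoc, inv_mul_cancel₀ (hc k), mul_one, mul_comm]
      rw [this]
    · intro n hn
      rw [reflect_C_mul, hX n hn]
      ring
  have hd : ∀ n, d' n = C (c n) * d n :=
    chow_unique _ (fun n => by simp [hdiag n, hc n]) _ _ _ _ hdH' key
  intro n
  refine ⟨hd n, ?_⟩
  obtain ⟨_, _, _, hH', _⟩ := hdH'
  rw [hH' n, hH n, Finset.mul_sum]
  refine Finset.sum_congr rfl fun k hk => ?_
  show C (r n k * c n * (c k)⁻¹) * d' k = C (c n) * (C (r n k) * d k)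
  rw [hd k, ← mul_assoc, ← C_mul, ← mul_assoc, ← C_mul]
  have : r n k * c n * (c k)⁻¹ * c k = c n * r n k := by
    rw [mul_assoc, inv_mul_cancel₀ (hc k), mul_one, mul_comm]
  rw [this]
end

section
/- Let R = (r_{n,k})_{n,k=0}^N be a lower triangular matrix with all diagonal entries equal to 1. The following are equivalent: (i) R is resolvable, i.e., there exist nonnegative reals λ_{n,k} and monic polynomials R_{n,k} with R_{n,0} equal to the n-th row generating polynomial Σ_k r_{n,k}t^k, R_{n,n} = t^n, t^k | R_{n,k}, and R_{n+1,k} = R_{n+1,k+1} + λ_{n,k}R_{n,k}; (ii) there exist diagonal linear operators α_i on R[t] with α_i(t^k) = α_{i,k}t^k, α_{i,k} ≥ 0, such that Σ_k r_{n,k}t^k = (t+α_1)(t+α_2)···(t+α_n)1; (iii) R is totally nonnegative. -/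
open Polynomial

/-- The generating polynomial `Rₙ = Σ_k r n k · tᵏ` of the `n`th row. -/
noncomputable def RowPoly (r : ℕ → ℕ → ℝ) (n : ℕ) : ℝ[X] :=
  ∑ k ∈ Finset.range (n + 1), C (r n k) * X ^ k

/-- `r` (restricted to indices `≤ N`) is totally nonnegative: every minor is
nonnegative. -/
def TotallyNonneg (N : ℕ) (r : ℕ → ℕ → ℝ) : Prop :=
  ∀ (m : ℕ) (rows cols : Fin m → ℕ), StrictMono rows → StrictMono cols →
    (∀ i, rows i ≤ N) → (∀ i, cols i ≤ N) →
    0 ≤ (Matrix.of fun i j => r (rows i) (cols j)).det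

/-- `r` is resolvable: there is an array `λ_{n,k} ≥ 0` and an array of monic
polynomials `R_{n,k}` with `R_{n,0} = Rₙ`, `R_{n,n} = tⁿ`, `tᵏ ∣ R_{n,k}`, and
`R_{n+1,k} = R_{n+1,k+1} + λ_{n,k} R_{n,k}`. -/
def Resolvable (N : ℕ) (r : ℕ → ℕ → ℝ) : Prop :=
  ∃ (lam : ℕ → ℕ → ℝ) (Rp : ℕ → ℕ → ℝ[X]),
    (∀ n k, k ≤ n → n < N → 0 ≤ lam n k) ∧
    (∀ n ≤ N, Rp n 0 = RowPoly r n ∧ Rp n n = X ^ n) ∧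
    (∀ n k, k ≤ n → n ≤ N → (Rp n k).Monic ∧ X ^ k ∣ Rp n k) ∧
    (∀ n k, k ≤ n → n + 1 ≤ N → Rp (n + 1) k = Rp (n + 1) (k + 1) + C (lam n k) * Rp n k)

/-- There are diagonal linear operators `αᵢ` with nonnegative entries `α_{i,k}`
(`αᵢ(tᵏ) = α_{i,k} tᵏ`) such that `Rₙ = (t+α₁)(t+α₂)⋯(t+αₙ) 1`.  Here
`Q m k = (t+α₁)⋯(t+α_m) tᵏ`, encoded by the recursion
`Q (m+1) k = Q m (k+1) + α_{m+1,k} · Q m k` with `Q 0 k = tᵏ`. -/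
def OperatorForm (N : ℕ) (r : ℕ → ℕ → ℝ) : Prop :=
  ∃ (α : ℕ → ℕ → ℝ) (Q : ℕ → ℕ → ℝ[X]),
    (∀ i k, 1 ≤ i → i ≤ N → 0 ≤ α i k) ∧
    (∀ k, Q 0 k = X ^ k) ∧
    (∀ m k, Q (m + 1) k = Q m (k + 1) + C (α (m + 1) k) * Q m k) ∧
    (∀ n ≤ N, RowPoly r n = Q n 0)

/-! Writing `α i k` for the entries of the operators, the row polynomials satisfy
`R_{n+1} = t S_n + α_{n+1,0} R_n`, where `S_n` are the row polynomials built from the shifted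
operators `α i (k + 1)`. So the array `R` arises from the block matrix `1 ⊕ S` by adding
nonnegative multiples of each row to the next one, operations that preserve total
nonnegativity, and induction on `N` gives (ii) ⇒ (iii).

Conversely, if `R` is totally nonnegative, the ratios `r_{n+1,0} / r_{n,0}` are nonnegative (and
a `2 × 2` minor shows that the first column stays zero once it vanishes). Clearing the first
column with them leaves an array `S` whose minors with consecutive rows are again nonnegative,
since each is a bordered minor of `R` divided by `r_{a,0}`. Iterating this peeling produces the
operators, proving (iii) ⇒ (ii). Condition (i) is (ii) reindexed: `R_{n,k}` is
`(t + α_1) ⋯ (t + α_{n-k}) tᵏ` and `λ_{n,k} = α_{n-k+1,k}`. -/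

theorem Matrix.det_succ_of_column_zero {R : Type*} [CommRing R] {n : ℕ}
    (A : Matrix (Fin (n + 1)) (Fin (n + 1)) R) (h : ∀ i : Fin n, A i.succ 0 = 0) :
    A.det = A 0 0 * (A.submatrix Fin.succ Fin.succ).det := by
  simp [Matrix.det_succ_column_zero A, Fin.sum_univ_succ, h]

theorem Matrix.det_succ_of_row_zero {R : Type*} [CommRing R] {n : ℕ}
    (A : Matrix (Fin (n + 1)) (Fin (n + 1)) R) (h : ∀ j : Fin n, A 0 j.succ = 0) :
    A.det = A 0 0 * (A.submatrix Fin.succ Fin.succ).det := by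
  simp [Matrix.det_succ_row_zero A, Fin.sum_univ_succ, h]

theorem StrictMono.update {k : ℕ} {f : Fin k → ℕ} (hf : StrictMono f) {i₀ : Fin k} {v : ℕ}
    (hlt : ∀ i < i₀, f i < v) (hgt : ∀ i, i₀ < i → v < f i) :
    StrictMono (Function.update f i₀ v) := by
  intro a b hab
  by_cases ha : a = i₀ <;> by_cases hb : b = i₀
  · exact absurd (ha.trans hb.symm ▸ hab) (lt_irrefl _)
  · subst ha; simpa [Function.update_of_ne hb] using hgt b hab
  · subst hb; simpa [Function.update_of_ne ha] using hlt a hab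
  · simpa [Function.update_of_ne ha, Function.update_of_ne hb] using hf hab

theorem StrictMono.pred {k : ℕ} {f : Fin k → ℕ} (hf : StrictMono f) (h : ∀ i, f i ≠ 0) :
    StrictMono fun i => f i - 1 := fun a b hab => by
  have := hf hab; have := h a; show f a - 1 < f b - 1; omega

namespace TotallyNonneg

variable {N : ℕ} {A B : ℕ → ℕ → ℝ}

theorem congr (hA : TotallyNonneg N A) (h : ∀ n ≤ N, ∀ j ≤ N, A n j = B n j) :
    TotallyNonneg N B := by
  intro m rows cols hr hc hrN hcN
  convert hA m rows cols hr hc hrN hcN using 2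
  ext i j
  exact (h _ (hrN i) _ (hcN j)).symm

theorem zero_of_nonneg (h : 0 ≤ A 0 0) : TotallyNonneg 0 A := by
  intro m rows cols hr _ hrN hcN
  match m with
  | 0 => simp
  | 1 => simpa [Matrix.det_fin_one, Nat.le_zero.mp (hrN 0), Nat.le_zero.mp (hcN 0)] using h
  | _ + 2 => have := hr (show (0 : Fin _) < 1 from Fin.zero_lt_one); have := hrN 1; omega

/-- Replacing a row `m + 1` of a minor by row `m` gives a minor or a matrix with two equal rows. -/
theorem det_updateRow_pred_nonneg (hA : TotallyNonneg N A) {m k : ℕ} {rows cols : Fin k → ℕ}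
    (hr : StrictMono rows) (hcols : StrictMono cols) (hrN : ∀ i, rows i ≤ N)
    (hcN : ∀ j, cols j ≤ N) {i₀ : Fin k} (hi₀ : rows i₀ = m + 1) :
    0 ≤ ((Matrix.of fun i j => A (rows i) (cols j)).updateRow i₀ fun j => A m (cols j)).det := by
  by_cases hprev : ∃ i₁, rows i₁ = m
  · obtain ⟨i₁, hi₁⟩ := hprev
    have hne : i₁ ≠ i₀ := fun h => by subst h; omega
    refine (Matrix.det_zero_of_row_eq hne ?_).ge
    ext j
    simp [Matrix.updateRow_ne hne, hi₁]
  push Not at hprev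
  have hmono : StrictMono (Function.update rows i₀ m) := by
    refine hr.update (fun i hi => ?_) (fun i hi => ?_)
    · have := hr hi; have := hprev i; omega
    · have := hr hi; omega
  convert hA k _ cols hmono hcols (fun i => ?_) hcN using 2
  · ext i j
    rcases eq_or_ne i i₀ with rfl | hi
    · simp
    · simp [hi]
  · rcases eq_or_ne i i₀ with rfl | hi
    · simp only [Function.update_self]
      have := hrN i
      omega
    · simpa [hi] using hrN i

theorem addRow (hA : TotallyNonneg N A) (m : ℕ) {c : ℝ} (hc : 0 ≤ c) :
    TotallyNonneg N fun n j => if n = m + 1 then A n j + c * A m j else A n j := by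
  intro k rows cols hr hcols hrN hcN
  set M : Matrix (Fin k) (Fin k) ℝ := Matrix.of fun i j => A (rows i) (cols j)
  by_cases hrow : ∃ i₀, rows i₀ = m + 1
  swap
  · push Not at hrow
    simpa [hrow] using hA k rows cols hr hcols hrN hcN
  obtain ⟨i₀, hi₀⟩ := hrow
  have hsplit : (Matrix.of fun i j => if rows i = m + 1 then A (rows i) (cols j) +
      c * A m (cols j) else A (rows i) (cols j)) =
      M.updateRow i₀ (M i₀ + c • fun j => A m (cols j)) := by
    ext i j
    rcases eq_or_ne i i₀ with rfl | hi
    · simp [M, hi₀]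
    · have : rows i ≠ m + 1 := hi₀ ▸ hr.injective.ne hi
      simp [M, Matrix.updateRow_ne hi, this]
  rw [hsplit, Matrix.det_updateRow_add, Matrix.det_updateRow_smul, Matrix.updateRow_eq_self]
  exact add_nonneg (hA k rows cols hr hcols hrN hcN)
    (mul_nonneg hc (hA.det_updateRow_pred_nonneg hr hcols hrN hcN hi₀))

theorem of_block {s : ℕ → ℕ → ℝ} (hs : TotallyNonneg N s) (h00 : 0 ≤ B 0 0)
    (hrow : ∀ j, B 0 (j + 1) = 0) (hcol : ∀ n, B (n + 1) 0 = 0)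
    (hB : ∀ n j, B (n + 1) (j + 1) = s n j) : TotallyNonneg (N + 1) B := by
  have hrow' : ∀ j, j ≠ 0 → B 0 j = 0 := fun j hj => by
    obtain ⟨j, rfl⟩ := Nat.exists_eq_succ_of_ne_zero hj; exact hrow j
  have hcol' : ∀ n, n ≠ 0 → B n 0 = 0 := fun n hn => by
    obtain ⟨n, rfl⟩ := Nat.exists_eq_succ_of_ne_zero hn; exact hcol n
  have hinner : ∀ (k : ℕ) (rows cols : Fin k → ℕ), StrictMono rows → StrictMono cols →
      (∀ i, rows i ≠ 0) → (∀ j, cols j ≠ 0) → (∀ i, rows i ≤ N + 1) → (∀ j, cols j ≤ N + 1) →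
      0 ≤ (Matrix.of fun i j => B (rows i) (cols j)).det := by
    intro k rows cols hr hc hr0 hc0 hrN hcN
    convert hs k _ _ (hr.pred hr0) (hc.pred hc0) (fun i => by have := hrN i; omega)
      (fun j => by have := hcN j; omega) using 2
    ext i j
    obtain ⟨n, hn⟩ := Nat.exists_eq_succ_of_ne_zero (hr0 i)
    obtain ⟨l, hl⟩ := Nat.exists_eq_succ_of_ne_zero (hc0 j)
    simp [hn, hl, hB]
  intro m rows cols hr hc hrN hcN
  rcases m with _ | k
  · simp
  have hr_ne : rows 0 ≠ 0 → ∀ i, rows i ≠ 0 := fun h i =>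
    (Nat.pos_of_ne_zero h).trans_le (hr.monotone (Fin.zero_le i)) |>.ne'
  have hc_ne : cols 0 ≠ 0 → ∀ j, cols j ≠ 0 := fun h j =>
    (Nat.pos_of_ne_zero h).trans_le (hc.monotone (Fin.zero_le j)) |>.ne'
  by_cases hr0 : rows 0 = 0 <;> by_cases hc0 : cols 0 = 0
  · have hsucc : ∀ (f : Fin (k + 1) → ℕ), StrictMono f → ∀ i : Fin k, f i.succ ≠ 0 :=
      fun f hf i => (hf (Fin.succ_pos i)).ne_bot
    rw [Matrix.det_succ_of_row_zero _ fun j => by simpa [hr0] using hrow' _ (hsucc cols hc j)]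
    refine mul_nonneg (by simpa [hr0, hc0] using h00) ?_
    exact hinner k _ _ (hr.comp Fin.strictMono_succ) (hc.comp Fin.strictMono_succ)
      (hsucc rows hr) (hsucc cols hc) (fun i => hrN _) (fun j => hcN _)
  · rw [Matrix.det_eq_zero_of_row_eq_zero 0 fun j => by simpa [hr0] using hrow' _ (hc_ne hc0 j)]
  · rw [Matrix.det_eq_zero_of_column_eq_zero 0 fun i => by
      simpa [hc0] using hcol' _ (hr_ne hr0 i)]
  · exact hinner _ rows cols hr hc (hr_ne hr0) (hc_ne hc0) hrN hcN

theorem coeff_of_recurrence {p q : ℕ → ℝ[X]} {c : ℕ → ℝ}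
    (hq : TotallyNonneg N fun n j => (q n).coeff j) (hc : ∀ n ≤ N, 0 ≤ c n) (hp0 : p 0 = 1)
    (hp : ∀ n ≤ N, p (n + 1) = X * q n + C (c n) * p n) :
    TotallyNonneg (N + 1) fun n j => (p n).coeff j := by
  -- rows `≤ m` are those of `p`, the others those of the block matrix `1 ⊕ q`;
  -- passing from `m` to `m + 1` is one row operation
  have key : ∀ m ≤ N + 1, TotallyNonneg (N + 1) fun n j =>
      (if n ≤ m then p n else X * q (n - 1)).coeff j := by
    intro m hm
    induction m with
    | zero =>
      refine hq.of_block ?_ (fun j => ?_) (fun n => ?_) (fun n j => ?_) <;>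
        simp [hp0, coeff_one, coeff_X_mul]
    | succ m ih =>
      convert (ih (by omega)).addRow m (hc m (by omega)) using 1
      ext n j
      rcases lt_trichotomy n (m + 1) with h | rfl | h
      · simp [h.le, h.ne, Nat.le_of_lt_succ h]
      · simp [hp m (by omega)]
      · simp [h.ne', not_le.2 h, not_le.2 (Nat.lt_of_succ_lt h)]
  exact (key (N + 1) le_rfl).congr fun n hn j _ => by simp [hn]

end TotallyNonneg

theorem rowPoly_coeff {r : ℕ → ℕ → ℝ} (htri : ∀ n k, n < k → r n k = 0) (n j : ℕ) :
    (RowPoly r n).coeff j = r n j := by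
  simp only [RowPoly, finsetSum_coeff, coeff_C_mul_X_pow, Finset.sum_ite_eq, Finset.mem_range]
  split_ifs with h
  · rfl
  · exact (htri n j (by omega)).symm

/-- `opPoly α m k = (t + α_1) ⋯ (t + α_m) tᵏ`, where `α_i` acts on `tᵏ` as multiplication by
`α i k`. -/
noncomputable def opPoly (α : ℕ → ℕ → ℝ) : ℕ → ℕ → ℝ[X]
  | 0, k => X ^ k
  | m + 1, k => opPoly α m (k + 1) + C (α (m + 1) k) * opPoly α m k

section opPoly

variable (α : ℕ → ℕ → ℝ)

@[simp]
theorem opPoly_zero (k : ℕ) : opPoly α 0 k = X ^ k := rfl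

theorem opPoly_succ (m k : ℕ) :
    opPoly α (m + 1) k = opPoly α m (k + 1) + C (α (m + 1) k) * opPoly α m k := rfl

theorem opPoly_add_right (m k l : ℕ) :
    opPoly α m (k + l) = X ^ l * opPoly (fun i j => α i (j + l)) m k := by
  induction m generalizing k with
  | zero => simp [pow_add, mul_comm]
  | succ m ih =>
    rw [opPoly_succ, opPoly_succ, show k + l + 1 = k + 1 + l by omega, ih, ih]
    ring

theorem opPoly_succ_right (m k : ℕ) :
    opPoly α m (k + 1) = X * opPoly (fun i j => α i (j + 1)) m k := by
  simpa using opPoly_add_right α m k 1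

theorem X_pow_dvd_opPoly (m k : ℕ) : X ^ k ∣ opPoly α m k := by
  have := opPoly_add_right α m 0 k
  rw [zero_add] at this
  exact this ▸ dvd_mul_right _ _

theorem natDegree_opPoly (m k : ℕ) : (opPoly α m k).natDegree = m + k := by
  induction m generalizing k with
  | zero => simp
  | succ m ih =>
    have hlt : (C (α (m + 1) k) * opPoly α m k).natDegree < (opPoly α m (k + 1)).natDegree :=
      (natDegree_C_mul_le _ _).trans_lt (by rw [ih, ih]; omega)
    rw [opPoly_succ, natDegree_add_eq_left_of_natDegree_lt hlt, ih]
    omega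

theorem monic_opPoly (m k : ℕ) : (opPoly α m k).Monic := by
  induction m generalizing k with
  | zero => exact monic_X_pow k
  | succ m ih =>
    refine (ih (k + 1)).add_of_left (degree_lt_degree ?_)
    exact (natDegree_C_mul_le _ _).trans_lt (by rw [natDegree_opPoly, natDegree_opPoly]; omega)

theorem opPoly_congr {β : ℕ → ℕ → ℝ} {m k : ℕ}
    (h : ∀ i j, 1 ≤ i → i + j ≤ m + k → α i j = β i j) : opPoly α m k = opPoly β m k := by
  induction m generalizing k with
  | zero => rfl
  | succ m ih =>
    rw [opPoly_succ, opPoly_succ, h _ _ le_add_self (by omega),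
      ih fun i j hi hij => h i j hi (by omega), ih fun i j hi hij => h i j hi (by omega)]

end opPoly

/-- Only the entries `α i k` with `i + k ≤ N` enter `opPoly α n 0` for `n ≤ N`, so only those
are required to be nonnegative. -/
def NonnegOpForm (N : ℕ) (r : ℕ → ℕ → ℝ) : Prop :=
  ∃ α : ℕ → ℕ → ℝ, (∀ i k, 1 ≤ i → i + k ≤ N → 0 ≤ α i k) ∧ ∀ n ≤ N, RowPoly r n = opPoly α n 0

theorem operatorForm_iff_nonnegOpForm {N : ℕ} {r : ℕ → ℕ → ℝ} :
    OperatorForm N r ↔ NonnegOpForm N r := by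
  constructor
  · rintro ⟨α, Q, hα, hQ0, hQs, hrow⟩
    have hQ : ∀ m k, Q m k = opPoly α m k := by
      intro m
      induction m with
      | zero => simp [hQ0]
      | succ m ih => simp [hQs, ih, opPoly_succ]
    exact ⟨α, fun i k hi hik => hα i k hi (by omega), fun n hn => (hrow n hn).trans (hQ n 0)⟩
  · rintro ⟨α, hα, hrow⟩
    let β : ℕ → ℕ → ℝ := fun i k => if i + k ≤ N then α i k else 0
    refine ⟨β, opPoly β, fun i k hi _ => ?_, fun _ => rfl, fun _ _ => rfl, fun n hn => ?_⟩
    · by_cases hik : i + k ≤ N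
      · simpa [β, hik] using hα i k hi hik
      · simp [β, hik]
    · rw [hrow n hn]
      exact opPoly_congr α fun i j _ hij => by simp [β, show i + j ≤ N by omega]

theorem resolvable_iff_nonnegOpForm {N : ℕ} {r : ℕ → ℕ → ℝ} :
    Resolvable N r ↔ NonnegOpForm N r := by
  constructor
  · rintro ⟨lam, Rp, hlam, hends, -, hrec⟩
    let α : ℕ → ℕ → ℝ := fun i k => lam (i - 1 + k) k
    have hR : ∀ m k, m + k ≤ N → opPoly α m k = Rp (m + k) k := by
      intro m
      induction m with
      | zero => exact fun k hk => by simpa using (hends k (by omega)).2.symm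
      | succ m ih =>
        intro k hk
        rw [opPoly_succ, ih (k + 1) (by omega), ih k (by omega), show m + 1 + k = m + k + 1 by omega,
          hrec (m + k) k (by omega) (by omega), show m + (k + 1) = m + k + 1 by omega]
        simp [α]
    refine ⟨α, fun i k hi hik => hlam _ _ (by omega) (by omega), fun n hn => ?_⟩
    rw [← (hends n hn).1, hR n 0 (by omega), add_zero]
  · rintro ⟨α, hα, hrow⟩
    refine ⟨fun n k => α (n - k + 1) k, fun n k => opPoly α (n - k) k,
      fun n k hk hn => hα _ _ (by omega) (by omega), fun n hn => by simp [hrow n hn],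
      fun n k _ _ => ⟨monic_opPoly α _ _, X_pow_dvd_opPoly α _ _⟩, fun n k hk _ => ?_⟩
    dsimp only
    rw [show n + 1 - k = n - k + 1 by omega, opPoly_succ, show n + 1 - (k + 1) = n - k by omega]

theorem TotallyNonneg.opPoly_coeff {N : ℕ} {α : ℕ → ℕ → ℝ}
    (hα : ∀ i k, 1 ≤ i → i + k ≤ N → 0 ≤ α i k) :
    TotallyNonneg N fun n j => (opPoly α n 0).coeff j := by
  induction N generalizing α with
  | zero => exact .zero_of_nonneg (by simp)
  | succ N ih =>
    refine .coeff_of_recurrence (ih fun i k hi hik => hα i (k + 1) hi (by omega))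
      (fun n hn => hα (n + 1) 0 (by omega) (by omega)) (by simp) fun n _ => ?_
    rw [opPoly_succ, opPoly_succ_right]

theorem NonnegOpForm.totallyNonneg {N : ℕ} {r : ℕ → ℕ → ℝ}
    (htri : ∀ n k, n < k → r n k = 0) (h : NonnegOpForm N r) : TotallyNonneg N r := by
  obtain ⟨α, hα, hrow⟩ := h
  exact (TotallyNonneg.opPoly_coeff hα).congr fun n hn j _ => by rw [← hrow n hn, rowPoly_coeff htri]

def ConsecutiveRowsNonneg (N : ℕ) (r : ℕ → ℕ → ℝ) : Prop :=
  ∀ (m a : ℕ) (cols : Fin m → ℕ), StrictMono cols → a + m ≤ N + 1 → (∀ j, cols j ≤ N) →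
    0 ≤ (Matrix.of fun i j : Fin m => r (a + i) (cols j)).det

theorem TotallyNonneg.consecutiveRowsNonneg {N : ℕ} {r : ℕ → ℕ → ℝ} (h : TotallyNonneg N r) :
    ConsecutiveRowsNonneg N r := fun m a _ hcols ham hcN =>
  h m (fun i => a + i) _ (fun _ _ hij => by simpa using hij) hcols (fun i => by omega) hcN

/-- The ratio by which row `n` is subtracted from row `n + 1` to clear the first column.
When `r n 0 = 0` it is `0` (division by zero), and then `r (n + 1) 0 = 0` as well. -/
noncomputable def peelRatio (r : ℕ → ℕ → ℝ) (n : ℕ) : ℝ := r (n + 1) 0 / r n 0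

/-- The array left after clearing the first column and deleting the first row and column. -/
noncomputable def peel (r : ℕ → ℕ → ℝ) (n j : ℕ) : ℝ :=
  r (n + 1) (j + 1) - peelRatio r n * r n (j + 1)

namespace ConsecutiveRowsNonneg

variable {N : ℕ} {r : ℕ → ℕ → ℝ}

theorem entry_nonneg (h : ConsecutiveRowsNonneg N r) {n j : ℕ} (hn : n ≤ N) (hj : j ≤ N) :
    0 ≤ r n j := by
  simpa using h 1 n (fun _ => j) (Subsingleton.strictMono _) (by omega) fun _ => hj

theorem succ_zero_eq_zero (h : ConsecutiveRowsNonneg N r) (hdiag : ∀ n ≤ N, r n n = 1) {n : ℕ}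
    (hn : n + 1 ≤ N) (h0 : r n 0 = 0) : r (n + 1) 0 = 0 := by
  rcases Nat.eq_zero_or_pos n with rfl | hpos
  · simp [hdiag 0 (by omega)] at h0
  -- the minor on rows `n, n + 1` and columns `0, n` equals `-r (n + 1) 0`
  have hminor := h 2 n ![0, n] (Fin.strictMono_iff_lt_succ.2 fun i => by fin_cases i; simpa)
    (by omega) fun j => by fin_cases j <;> simp; omega
  simp [Matrix.det_fin_two, h0, hdiag n (by omega)] at hminor
  exact le_antisymm hminor (h.entry_nonneg hn (by omega))

theorem peelRatio_mul (h : ConsecutiveRowsNonneg N r) (hdiag : ∀ n ≤ N, r n n = 1) {n : ℕ}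
    (hn : n + 1 ≤ N) : peelRatio r n * r n 0 = r (n + 1) 0 := by
  by_cases h0 : r n 0 = 0
  · simp [h0, h.succ_zero_eq_zero hdiag hn h0]
  · exact div_mul_cancel₀ _ h0

theorem peelRatio_nonneg (h : ConsecutiveRowsNonneg N r) {n : ℕ} (hn : n + 1 ≤ N) :
    0 ≤ peelRatio r n :=
  div_nonneg (h.entry_nonneg hn (by omega)) (h.entry_nonneg (by omega) (by omega))

end ConsecutiveRowsNonneg

theorem consecutiveRowsNonneg_peel {N : ℕ} {r : ℕ → ℕ → ℝ} (h : ConsecutiveRowsNonneg (N + 1) r)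
    (hdiag : ∀ n ≤ N + 1, r n n = 1) : ConsecutiveRowsNonneg N (peel r) := by
  intro m a cols hcols ham hcN
  by_cases ha : r a 0 = 0
  -- if `r a 0 = 0`, the first column vanishes from row `a` on and the peeled minor is a minor of `r`
  · have hz : ∀ i < m, r (a + i) 0 = 0 := by
      intro i hi
      induction i with
      | zero => simpa using ha
      | succ i ih => exact h.succ_zero_eq_zero hdiag (n := a + i) (by omega) (ih (by omega))
    convert h m (a + 1) (fun j => cols j + 1) (fun x y hxy => by simpa using hcols hxy)
      (by omega) (fun j => by simpa using hcN j) using 2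
    ext i j
    simp [peel, peelRatio, hz i i.isLt, add_right_comm]
  have hpos : 0 < r a 0 := (h.entry_nonneg (by omega) (by omega)).lt_of_ne' ha
  -- clearing the first column of the bordered minor `D` leaves `r a 0` times the peeled minor
  set D : Matrix (Fin (m + 1)) (Fin (m + 1)) ℝ :=
    Matrix.of fun i j => r (a + i) ((Fin.cons 0 fun j => cols j + 1 : Fin (m + 1) → ℕ) j)
  have hD : 0 ≤ D.det := h (m + 1) a _
    (Fin.strictMono_cons.2 ⟨fun _ => Nat.succ_pos _, fun x y hxy => by simpa using hcols hxy⟩)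
    (by omega) fun j => Fin.cases (by simp) (fun j => by simpa using hcN j) j
  set E : Matrix (Fin (m + 1)) (Fin (m + 1)) ℝ :=
    Matrix.of (Fin.cons (D 0) fun i j => D i.succ j - peelRatio r (a + i) * D i.castSucc j)
  have hDE : D.det = E.det :=
    Matrix.det_eq_of_forall_row_eq_smul_add_pred (fun i => peelRatio r (a + i))
      (fun j => by simp [E]) (fun i j => by simp [E])
  have hE : E.det = r a 0 * (Matrix.of fun i j : Fin m => peel r (a + i) (cols j)).det := by
    rw [Matrix.det_succ_of_column_zero]
    · rfl
    · intro i
      simp [E, D, ← add_assoc, h.peelRatio_mul hdiag (n := a + i) (by omega)]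
  exact nonneg_of_mul_nonneg_right (hE ▸ hDE ▸ hD) hpos

theorem peel_eq_zero_of_lt {r : ℕ → ℕ → ℝ} (htri : ∀ n k, n < k → r n k = 0) {n k : ℕ}
    (h : n < k) : peel r n k = 0 := by
  simp [peel, htri (n + 1) (k + 1) (by omega), htri n (k + 1) (by omega)]

theorem rowPoly_succ_eq_peel {r : ℕ → ℕ → ℝ} (htri : ∀ n k, n < k → r n k = 0) {n : ℕ}
    (hratio : peelRatio r n * r n 0 = r (n + 1) 0) :
    RowPoly r (n + 1) = X * RowPoly (peel r) n + C (peelRatio r n) * RowPoly r n := by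
  ext (_ | j)
  · simp [rowPoly_coeff htri, hratio]
  · simp [rowPoly_coeff htri, rowPoly_coeff fun _ _ => peel_eq_zero_of_lt htri, coeff_X_mul, peel]

theorem ConsecutiveRowsNonneg.nonnegOpForm {N : ℕ} {r : ℕ → ℕ → ℝ}
    (htri : ∀ n k, n < k → r n k = 0) (hdiag : ∀ n ≤ N, r n n = 1)
    (h : ConsecutiveRowsNonneg N r) : NonnegOpForm N r := by
  induction N generalizing r with
  | zero => exact ⟨0, by omega, fun n hn => by simp [Nat.le_zero.1 hn, RowPoly, hdiag 0 le_rfl]⟩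
  | succ N ih =>
    obtain ⟨α', hα', hrow'⟩ := ih (r := peel r)
      (fun _ _ => peel_eq_zero_of_lt htri)
      (fun n hn => by simp [peel, htri n (n + 1) (by omega), hdiag (n + 1) (by omega)])
      (consecutiveRowsNonneg_peel h hdiag)
    let α : ℕ → ℕ → ℝ := fun i k => Nat.casesOn k (peelRatio r (i - 1)) (α' i)
    refine ⟨α, fun i k hi hik => ?_, fun n hn => ?_⟩
    · cases k with
      | zero => exact h.peelRatio_nonneg (by omega)
      | succ k => exact hα' i k hi (by omega)
    · induction n with
      | zero => simp [RowPoly, hdiag 0 (by omega)]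
      | succ n ihn =>
        rw [opPoly_succ, opPoly_succ_right, ← ihn (by omega)]
        exact (rowPoly_succ_eq_peel htri (h.peelRatio_mul hdiag hn)).trans
          (by rw [hrow' n (by omega)]; rfl)

theorem stmt9 (N : ℕ) (r : ℕ → ℕ → ℝ)
    (htri : ∀ n k, n < k → r n k = 0) (hdiag : ∀ n ≤ N, r n n = 1) :
    (Resolvable N r ↔ TotallyNonneg N r) ∧ (OperatorForm N r ↔ TotallyNonneg N r) := by
  have key : NonnegOpForm N r ↔ TotallyNonneg N r :=
    ⟨fun h => h.totallyNonneg htri,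
      fun h => h.consecutiveRowsNonneg.nonnegOpForm htri hdiag⟩
  exact ⟨resolvable_iff_nonnegOpForm.trans key, operatorForm_iff_nonnegOpForm.trans key⟩
end

section
/- Let R be lower triangular with unit diagonal. Then γ(H_n[R]) = Σ_{S⊆[n-1], S∪{0} stable} det(R[S∪{n}, {0}∪S]) · t^{|S|}, where R[C,D] denotes the submatrix of R with rows C and columns D. In particular, if R is totally nonnegative, then the γ-polynomial of H_n[R] has nonnegative coefficients. -/
/-!
Write `[a] = 1 + X + ⋯ + X^(a-1)` and `G(n, j) = ∑_{k<n} r n k * [j - k] * d k`.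
Palindromicity of `Hₙ` (centre `(n-1)/2`) and of the `d k` (centre `k/2`) forces
`dₙ = X * G(n, n-1)`, and then `Hₙ = G(n, n)`. From `[a+2] = (1+X)[a+1] - X[a]`,
`G(n, j+2) = (1+X) G(n, j+1) - X G(n, j) + r n (j+1) * d (j+1)`.
The stable-set sum `Γ(n, j) = ∑_{S} det(R[S∪{n},{0}∪S]) X^|S| (1+X)^(j-1-2|S|)`, over stable
`S ⊆ [2, j-1]`, obeys the same recursion with `d (j+1)` replaced by `X * Γ(j+1, j)`: split
on whether `j+1 ∈ S`, and expand the minor `det(R[S∪{j+1,n}, {0}∪S∪{j+1}])` along its last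
column, which (`R` being lower unitriangular) has only the entries `1` and `r n (j+1)`. As `G`
and `Γ` agree for `j = 1, 2`, induction on `j` gives `G = Γ`, in particular `Hₙ = Γ(n, n)`.
Under total nonnegativity every coefficient of the γ-polynomial is a sum of minors of `R`.
-/

open Polynomial

/-- `d`, `H` are the Chow-derangement and Chow polynomials of the lower triangular
matrix `r` with unit diagonal (up to index `N`). -/
def ChowFamily (N : ℕ) (r : ℕ → ℕ → ℝ) (d H : ℕ → ℝ[X]) : Prop :=
  d 0 = 1 ∧
  (∀ n ≤ N, (d n).natDegree ≤ n) ∧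
  (∀ n ≤ N, reflect n (d n) = d n) ∧
  (∀ n ≤ N, H n = ∑ k ∈ Finset.range (n + 1), C (r n k) * d k) ∧
  (∀ n, 1 ≤ n → n ≤ N → reflect n (H n) = X * H n)

/-- The determinant of the `m × m` submatrix of `r` with rows and columns given by
the first `m` entries of the lists `rows`, `cols`. -/
noncomputable def subDet (r : ℕ → ℕ → ℝ) (rows cols : List ℕ) (m : ℕ) : ℝ :=
  (Matrix.of fun i j : Fin m => r (rows.getD i 0) (cols.getD j 0)).det

/-- `det(R[S∪{n}, {0}∪S])`: rows indexed by `S ∪ {n}` and columns by `{0} ∪ S`,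
each in increasing order. -/
noncomputable def minorDet (r : ℕ → ℕ → ℝ) (n : ℕ) (S : Finset ℕ) : ℝ :=
  subDet r (S.sort (· ≤ ·) ++ [n]) (0 :: S.sort (· ≤ ·)) (S.card + 1)

open Finset

lemma Matrix.det_eq_of_col_last_eq_zero {R : Type*} [CommRing R] {c : ℕ}
    (M : Matrix (Fin (c + 2)) (Fin (c + 2)) R)
    (h : ∀ i : Fin c, M i.castSucc.castSucc (Fin.last (c + 1)) = 0) :
    M.det = M (Fin.last (c + 1)) (Fin.last (c + 1)) * (M.submatrix Fin.castSucc Fin.castSucc).det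
      - M (Fin.last c).castSucc (Fin.last (c + 1)) *
        (M.submatrix (Fin.last c).castSucc.succAbove Fin.castSucc).det := by
  rw [Matrix.det_succ_column M (Fin.last (c + 1)), Fin.sum_univ_castSucc, Fin.sum_univ_castSucc,
    Finset.sum_eq_zero fun i _ => by rw [h i, mul_zero, zero_mul]]
  simp only [Fin.succAbove_last, Fin.val_castSucc, Fin.val_last]
  rw [show c + (c + 1) = 2 * c + 1 by ring, show c + 1 + (c + 1) = 2 * (c + 1) by ring, pow_succ,
    pow_mul, pow_mul, neg_one_sq, one_pow]
  ring

lemma List.getD_le_of_forall_le {l : List ℕ} {N : ℕ} (h : ∀ x ∈ l, x ≤ N) (i : ℕ) :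
    l.getD i 0 ≤ N := by
  rw [List.getD_eq_getElem?_getD]
  cases hi : l[i]? with
  | none => simp
  | some x => exact h x (List.mem_of_getElem? hi)

lemma List.SortedLT.strictMono_getD {l : List ℕ} (hl : l.SortedLT) {m : ℕ}
    (hm : m ≤ l.length) : StrictMono fun i : Fin m => l.getD i 0 := by
  intro i j hij
  simp only [List.getD_eq_getElem _ _ (i.2.trans_le hm), List.getD_eq_getElem _ _ (j.2.trans_le hm)]
  exact List.sortedLT_iff_getElem_lt_getElem_of_lt.mp hl hij

lemma Finset.sort_insert_of_forall_lt {α : Type*} [LinearOrder α] {s : Finset α} {a : α}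
    (h : ∀ b ∈ s, b < a) : (insert a s).sort (· ≤ ·) = s.sort (· ≤ ·) ++ [a] := by
  refine (sortedLT_sort _).eq_of_mem_iff ?_ (by simp [or_comm])
  rw [List.sortedLT_iff_pairwise, List.pairwise_append]
  exact ⟨(sortedLT_sort s).pairwise, by simp, by simpa using h⟩

lemma subDet_expand_last_column (r : ℕ → ℕ → ℝ) {L C : List ℕ} {a b m c : ℕ}
    (hL : L.length = c) (hC : C.length = c + 1) (hz : ∀ x ∈ L, r x m = 0) :
    subDet r (L ++ [a] ++ [b]) (C ++ [m]) (c + 2) =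
      r b m * subDet r (L ++ [a]) C (c + 1) - r a m * subDet r (L ++ [b]) C (c + 1) := by
  have col : ∀ j : Fin (c + 1), (C ++ [m]).getD j 0 = C.getD j 0 := fun j =>
    List.getD_append _ _ _ _ (by rw [hC]; exact j.2)
  have col_last : (C ++ [m]).getD (c + 1) 0 = m := by simp [hC]
  have row : ∀ i : Fin (c + 1), (L ++ [a] ++ [b]).getD i 0 = (L ++ [a]).getD i 0 := fun i =>
    List.getD_append _ _ _ _ (by simp [hL]; omega)
  have row_lt : ∀ i < c, (L ++ [a] ++ [b]).getD i 0 = (L ++ [b]).getD i 0 := fun i hi => by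
    rw [List.append_assoc, List.getD_append _ _ _ _ (hL ▸ hi),
      List.getD_append _ _ _ _ (hL ▸ hi)]
  unfold subDet
  rw [Matrix.det_eq_of_col_last_eq_zero]
  · congr 3
    · simp [hL, hC]
    · ext i j
      simp only [Matrix.submatrix_apply, Matrix.of_apply, Fin.val_castSucc, row, col]
    · simp [hL, hC]
    · ext i j
      simp only [Matrix.submatrix_apply, Matrix.of_apply, Fin.val_castSucc, col]
      induction i using Fin.lastCases with
      | last => simp [hL]
      | cast i =>
        rw [Fin.succAbove_castSucc_of_lt _ _ (Fin.castSucc_lt_last i), Fin.val_castSucc,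
          Fin.val_castSucc, row_lt _ i.2]
  · intro i
    simp only [Matrix.of_apply, Fin.val_castSucc, Fin.val_last, col_last, row_lt _ i.2]
    rw [List.getD_append _ _ _ _ (by omega), List.getD_eq_getElem _ _ (by omega)]
    exact hz _ (List.getElem_mem _)

lemma minorDet_empty (r : ℕ → ℕ → ℝ) (n : ℕ) : minorDet r n ∅ = r n 0 := by
  simp [minorDet, subDet]
  rfl

lemma minorDet_insert (r : ℕ → ℕ → ℝ) (n : ℕ) {S : Finset ℕ} {m : ℕ}
    (hlt : ∀ x ∈ S, x < m) (hz : ∀ x ∈ S, r x m = 0) (hm : r m m = 1) :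
    minorDet r n (insert m S) = r n m * minorDet r m S - minorDet r n S := by
  have hmS : m ∉ S := fun h => (hlt m h).false
  unfold minorDet
  rw [sort_insert_of_forall_lt hlt, card_insert_of_notMem hmS, ← List.cons_append,
    subDet_expand_last_column r (length_sort _) (by simp)
      (fun x hx => hz x ((mem_sort _).mp hx)), hm, one_mul]

lemma minorDet_nonneg {N : ℕ} {r : ℕ → ℕ → ℝ} (hr : TotallyNonneg N r) {n : ℕ}
    (hn : n ≤ N) {S : Finset ℕ} (hS : S ⊆ Icc 1 (n - 1)) : 0 ≤ minorDet r n S := by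
  have hbound : ∀ x ∈ S.sort (· ≤ ·), 1 ≤ x ∧ x < n := fun x hx => by
    have := mem_Icc.mp (hS ((mem_sort _).mp hx)); omega
  have hrows : (S.sort (· ≤ ·) ++ [n]).SortedLT := by
    rw [List.sortedLT_iff_pairwise, List.pairwise_append]
    exact ⟨(sortedLT_sort S).pairwise, by simp, fun x hx y hy => by
      simp only [List.mem_singleton] at hy; exact hy ▸ (hbound x hx).2⟩
  have hcols : (0 :: S.sort (· ≤ ·)).SortedLT := by
    rw [List.sortedLT_iff_pairwise, List.pairwise_cons]
    exact ⟨fun x hx => (hbound x hx).1, (sortedLT_sort S).pairwise⟩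
  have hrowsN : ∀ x ∈ S.sort (· ≤ ·) ++ [n], x ≤ N := by
    simp only [List.mem_append, List.mem_singleton]
    rintro x (hx | rfl)
    exacts [(hbound x hx).2.le.trans hn, hn]
  have hcolsN : ∀ x ∈ 0 :: S.sort (· ≤ ·), x ≤ N := by
    simp only [List.mem_cons]
    rintro x (rfl | hx)
    exacts [Nat.zero_le _, (hbound x hx).2.le.trans hn]
  exact hr _ _ _ (hrows.strictMono_getD (by simp)) (hcols.strictMono_getD (by simp))
    (fun i => List.getD_le_of_forall_le hrowsN i) (fun j => List.getD_le_of_forall_le hcolsN j)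

def stableSets (m : ℕ) : Finset (Finset ℕ) :=
  (Icc 1 m).powerset.filter (fun S => ∀ i ∈ insert 0 S, i + 1 ∉ insert 0 S)

lemma mem_stableSets {m : ℕ} {S : Finset ℕ} :
    S ∈ stableSets m ↔ S ⊆ Icc 2 m ∧ ∀ i ∈ S, i + 1 ∉ S := by
  simp only [stableSets, mem_filter, mem_powerset, mem_insert, subset_iff, mem_Icc]
  grind

lemma stableSets_of_le_one {m : ℕ} (hm : m ≤ 1) : stableSets m = {∅} := by
  ext S
  simp only [mem_stableSets, mem_singleton, subset_iff, mem_Icc]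
  constructor
  · rintro ⟨hsub, -⟩
    exact eq_empty_of_forall_notMem fun x hx => by have := hsub hx; omega
  · rintro rfl
    simp

lemma filter_notMem_stableSets (m : ℕ) :
    (stableSets m).filter (m ∉ ·) = stableSets (m - 1) := by
  ext S
  simp only [mem_filter, mem_stableSets, subset_iff, mem_Icc]
  grind

lemma erase_mem_stableSets {m : ℕ} {S : Finset ℕ} (hS : S ∈ stableSets m) (hm : m ∈ S) :
    S.erase m ∈ stableSets (m - 2) := by
  simp only [mem_stableSets, subset_iff, mem_Icc, mem_erase] at hS ⊢
  grind

lemma insert_mem_stableSets {m : ℕ} {S : Finset ℕ} (hm : 2 ≤ m)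
    (hS : S ∈ stableSets (m - 2)) : insert m S ∈ stableSets m := by
  simp only [mem_stableSets, subset_iff, mem_Icc, mem_insert] at hS ⊢
  grind

lemma notMem_of_mem_stableSets {k m : ℕ} {S : Finset ℕ} (hS : S ∈ stableSets k)
    (hkm : k < m) : m ∉ S := fun h => by
  have := mem_Icc.mp ((mem_stableSets.mp hS).1 h)
  omega

lemma two_mul_card_le_of_mem_stableSets {m : ℕ} {S : Finset ℕ} (hS : S ∈ stableSets m) :
    2 * S.card ≤ m := by
  obtain ⟨hsub, hst⟩ := mem_stableSets.mp hS
  have hdisj : Disjoint S (S.map (addRightEmbedding 1)) := by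
    simp only [disjoint_right, mem_map, addRightEmbedding_apply]
    rintro _ ⟨i, hi, rfl⟩
    exact hst i hi
  have hunion : S ∪ S.map (addRightEmbedding 1) ⊆ Icc 2 (m + 1) := by
    simp only [subset_iff, mem_Icc, mem_union, mem_map, addRightEmbedding_apply] at hsub ⊢
    grind
  have := card_le_card hunion
  rw [card_union_of_disjoint hdisj, card_map, Nat.card_Icc] at this
  omega

lemma sum_stableSets {M : Type*} [AddCommMonoid M] {m : ℕ} (hm : 2 ≤ m) (f : Finset ℕ → M) :
    ∑ S ∈ stableSets m, f S =
      ∑ S ∈ stableSets (m - 1), f S + ∑ S ∈ stableSets (m - 2), f (insert m S) := by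
  rw [← sum_filter_not_add_sum_filter (stableSets m) (m ∈ ·), filter_notMem_stableSets]
  congr 1
  refine sum_nbij' (·.erase m) (insert m) (fun S hS => ?_) (fun S hS => ?_) (fun S hS => ?_)
    (fun S hS => ?_) (fun S hS => ?_)
  · exact erase_mem_stableSets (mem_filter.mp hS).1 (mem_filter.mp hS).2
  · exact mem_filter.mpr ⟨insert_mem_stableSets hm hS, mem_insert_self m S⟩
  · exact insert_erase (mem_filter.mp hS).2
  · exact erase_insert (notMem_of_mem_stableSets hS (by omega))
  · rw [insert_erase (mem_filter.mp hS).2]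

noncomputable def qInt (a : ℕ) : ℝ[X] := ∑ i ∈ range a, X ^ i

lemma qInt_zero : qInt 0 = 0 := rfl

lemma qInt_succ (a : ℕ) : qInt (a + 1) = 1 + X * qInt a := by
  rw [qInt, geom_sum_succ, add_comm, qInt]

lemma one_sub_X_mul_qInt (a : ℕ) : (1 - X) * qInt a = 1 - X ^ a := mul_neg_geom_sum X a

lemma qInt_sub_add_two (j k : ℕ) :
    qInt (j + 2 - k) =
      (1 + X) * qInt (j + 1 - k) - X * qInt (j - k) + if k = j + 1 then 1 else 0 := by
  rcases lt_trichotomy k (j + 1) with hk | rfl | hk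
  · rw [if_neg hk.ne, show j + 2 - k = j - k + 1 + 1 by omega, show j + 1 - k = j - k + 1 by omega,
      qInt_succ, qInt_succ]
    ring
  · simp [show j + 2 - (j + 1) = 0 + 1 by omega, qInt_succ, qInt_zero]
  · simp [if_neg hk.ne', show j + 2 - k = 0 by omega, show j + 1 - k = 0 by omega,
      show j - k = 0 by omega, qInt_zero]

section

variable (r : ℕ → ℕ → ℝ) (d : ℕ → ℝ[X])

noncomputable def chowPartial (n j : ℕ) : ℝ[X] :=
  ∑ k ∈ range n, C (r n k) * qInt (j - k) * d k

lemma chowPartial_zero (n : ℕ) : chowPartial r d n 0 = 0 := by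
  simp [chowPartial, qInt_zero]

lemma chowPartial_one {n : ℕ} (hn : 1 ≤ n) : chowPartial r d n 1 = C (r n 0) * d 0 := by
  rw [chowPartial, sum_eq_single_of_mem 0 (mem_range.mpr hn)]
  · simp [qInt_succ, qInt_zero]
  · intro k _ hk
    simp [show 1 - k = 0 by omega, qInt_zero]

lemma chowPartial_add_two {n j : ℕ} (h : j + 1 < n) :
    chowPartial r d n (j + 2) =
      (1 + X) * chowPartial r d n (j + 1) - X * chowPartial r d n j
        + C (r n (j + 1)) * d (j + 1) := by
  rw [← sum_ite_eq_of_mem' (range n) (j + 1) (fun k => C (r n k) * d k) (mem_range.mpr h)]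
  simp only [chowPartial, mul_sum, ← sum_sub_distrib, ← sum_add_distrib]
  refine sum_congr rfl fun k _ => ?_
  rw [qInt_sub_add_two]
  split_ifs <;> ring

end

section

variable (r : ℕ → ℕ → ℝ)

noncomputable def gammaSum (n j : ℕ) : ℝ[X] :=
  ∑ S ∈ stableSets (j - 1), C (minorDet r n S) * (X ^ S.card * (1 + X) ^ (j - 1 - 2 * S.card))

lemma gammaSum_one (n : ℕ) : gammaSum r n 1 = C (r n 0) := by
  simp [gammaSum, stableSets_of_le_one, minorDet_empty]

lemma gammaSum_two (n : ℕ) : gammaSum r n 2 = C (r n 0) * (1 + X) := by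
  simp [gammaSum, stableSets_of_le_one, minorDet_empty]

lemma gammaSum_add_two {n j : ℕ} (hj : 1 ≤ j) (htri : ∀ x < j + 1, r x (j + 1) = 0)
    (hdiag : r (j + 1) (j + 1) = 1) :
    gammaSum r n (j + 2) = (1 + X) * gammaSum r n (j + 1) - X * gammaSum r n j
      + C (r n (j + 1)) * (X * gammaSum r (j + 1) j) := by
  have hS : ∑ S ∈ stableSets j,
        C (minorDet r n S) * (X ^ S.card * (1 + X) ^ (j + 1 - 2 * S.card))
      = (1 + X) * ∑ S ∈ stableSets j,
        C (minorDet r n S) * (X ^ S.card * (1 + X) ^ (j - 2 * S.card)) := by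
    rw [mul_sum]
    refine sum_congr rfl fun S hS => ?_
    rw [show j + 1 - 2 * S.card = j - 2 * S.card + 1 by
      have := two_mul_card_le_of_mem_stableSets hS; omega]
    ring
  have hinsert : ∑ S ∈ stableSets (j - 1), C (minorDet r n (insert (j + 1) S)) *
        (X ^ (insert (j + 1) S).card * (1 + X) ^ (j + 1 - 2 * (insert (j + 1) S).card))
      = C (r n (j + 1)) * (X * ∑ S ∈ stableSets (j - 1),
          C (minorDet r (j + 1) S) * (X ^ S.card * (1 + X) ^ (j - 1 - 2 * S.card)))
        - X * ∑ S ∈ stableSets (j - 1),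
          C (minorDet r n S) * (X ^ S.card * (1 + X) ^ (j - 1 - 2 * S.card)) := by
    rw [mul_sum, mul_sum, mul_sum, ← sum_sub_distrib]
    refine sum_congr rfl fun S hS => ?_
    have hlt : ∀ x ∈ S, x < j + 1 := fun x hx => by
      have := mem_Icc.mp ((mem_stableSets.mp hS).1 hx); omega
    rw [card_insert_of_notMem fun h => (hlt _ h).false,
      minorDet_insert r n hlt (fun x hx => htri x (hlt x hx)) hdiag,
      show j + 1 - 2 * (S.card + 1) = j - 1 - 2 * S.card by omega]
    simp only [map_sub, map_mul]
    ring
  simp only [gammaSum, Nat.add_sub_cancel, show j + 2 - 1 = j + 1 by omega]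
  rw [sum_stableSets (by omega), Nat.add_sub_cancel, show j + 1 - 2 = j - 1 by omega, hS, hinsert]
  ring

end

theorem chowPartial_eq_gammaSum {N : ℕ} {r : ℕ → ℕ → ℝ} {d : ℕ → ℝ[X]}
    (htri : ∀ n k, n < k → r n k = 0) (hdiag : ∀ n ≤ N, r n n = 1) (hd0 : d 0 = 1)
    (hd : ∀ n, 1 ≤ n → n ≤ N → d n = X * chowPartial r d n (n - 1))
    {j n : ℕ} (hj : 1 ≤ j) (hjn : j ≤ n) (hnN : n ≤ N) :
    chowPartial r d n j = gammaSum r n j := by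
  induction j using Nat.strong_induction_on generalizing n with
  | _ j ih =>
  obtain _ | _ | _ | j := j
  · omega
  · rw [chowPartial_one r d hjn, hd0, gammaSum_one, mul_one]
  · have hd1 : d 1 = 0 := by rw [hd 1 le_rfl (by omega), Nat.sub_self, chowPartial_zero, mul_zero]
    rw [chowPartial_add_two r d (j := 0) hjn, chowPartial_one r d (by omega), chowPartial_zero,
      hd0, hd1, gammaSum_two]
    ring
  · have hd2 : d (j + 1 + 1) = X * gammaSum r (j + 1 + 1) (j + 1) := by
      rw [hd _ (by omega) (by omega), Nat.add_sub_cancel,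
        ih (j + 1) (by omega) (by omega) (by omega) (by omega)]
    show chowPartial r d n (j + 1 + 2) = gammaSum r n (j + 1 + 2)
    rw [chowPartial_add_two r d (by omega),
      gammaSum_add_two r (by omega) (fun x hx => htri x _ hx) (hdiag _ (by omega)), hd2,
      ih (j + 1) (by omega) (by omega) (by omega) hnN,
      ih (j + 1 + 1) (by omega) (by omega) (by omega) hnN]

lemma Polynomial.reflect_sum {R ι : Type*} [Semiring R] (s : Finset ι) (f : ι → R[X])
    (N : ℕ) :
    reflect N (∑ i ∈ s, f i) = ∑ i ∈ s, reflect N (f i) :=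
  map_sum (⟨⟨reflect N, reflect_zero⟩, fun f g => reflect_add f g N⟩ : R[X] →+ R[X]) f s

lemma Polynomial.reflect_eq_X_pow_mul {R : Type*} [Semiring R] {p : R[X]} {k n : ℕ}
    (hp : p.natDegree ≤ k) (hpal : reflect k p = p) (hkn : k ≤ n) :
    reflect n p = X ^ (n - k) * p := by
  have h := reflect_mul (X ^ (n - k)) p (natDegree_X_pow_le _) hp
  rw [Nat.sub_add_cancel hkn, reflect_monomial, revAt_le le_rfl, Nat.sub_self, pow_zero, one_mul,
    hpal] at h
  conv_lhs => rw [← h]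
  exact reflect_reflect

namespace ChowFamily

variable {N : ℕ} {r : ℕ → ℕ → ℝ} {d H : ℕ → ℝ[X]}

lemma eq_X_mul_chowPartial (h : ChowFamily N r d H) (hdiag : ∀ n ≤ N, r n n = 1) {n : ℕ}
    (hn : 1 ≤ n) (hnN : n ≤ N) : d n = X * chowPartial r d n (n - 1) := by
  obtain ⟨-, hdeg, hpal, hH, hrefl⟩ := h
  have key := hrefl n hn hnN
  have hterm : ∀ k ∈ range (n + 1),
      reflect n (C (r n k) * d k) = C (r n k) * (X ^ (n - k) * d k) :=
    fun k hk => by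
      have hkn : k ≤ n := Nat.lt_succ_iff.mp (mem_range.mp hk)
      rw [reflect_C_mul, reflect_eq_X_pow_mul (hdeg k (hkn.trans hnN)) (hpal k (hkn.trans hnN)) hkn]
  rw [hH n hnN, reflect_sum, sum_congr rfl hterm, sum_range_succ, sum_range_succ, hdiag n hnN,
    Nat.sub_self, pow_zero, map_one, one_mul, one_mul] at key
  have hpart :
      X * ∑ k ∈ range n, C (r n k) * d k - ∑ k ∈ range n, C (r n k) * (X ^ (n - k) * d k)
      = (1 - X) * (X * chowPartial r d n (n - 1)) := by
    rw [chowPartial, mul_sum, mul_sum, mul_sum, ← sum_sub_distrib]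
    refine sum_congr rfl fun k hk => ?_
    have hq := one_sub_X_mul_qInt (n - 1 - k)
    rw [show n - k = n - 1 - k + 1 by have := mem_range.mp hk; omega, pow_succ]
    linear_combination (-(C (r n k) * X * d k)) * hq
  have hX : (1 - X : ℝ[X]) ≠ 0 := fun h0 => by simpa using congrArg (eval 0) h0
  refine mul_left_cancel₀ hX ?_
  rw [← hpart]
  linear_combination key

lemma eq_chowPartial (h : ChowFamily N r d H) (hdiag : ∀ n ≤ N, r n n = 1) {n : ℕ}
    (hn : 1 ≤ n) (hnN : n ≤ N) : H n = chowPartial r d n n := by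
  have hd := h.eq_X_mul_chowPartial hdiag hn hnN
  obtain ⟨-, -, -, hH, -⟩ := h
  rw [hH n hnN, sum_range_succ, hdiag n hnN, map_one, one_mul, hd, chowPartial, chowPartial,
    mul_sum, ← sum_add_distrib]
  refine sum_congr rfl fun k hk => ?_
  rw [show n - k = n - 1 - k + 1 by have := mem_range.mp hk; omega, qInt_succ]
  ring

lemma eq_gammaSum (h : ChowFamily N r d H) (htri : ∀ n k, n < k → r n k = 0)
    (hdiag : ∀ n ≤ N, r n n = 1) {n : ℕ} (hnN : n ≤ N) : H n = gammaSum r n n := by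
  rcases Nat.eq_zero_or_pos n with rfl | hn
  · obtain ⟨hd0, -, -, hH, -⟩ := h
    simp [hH 0 hnN, hd0, gammaSum, stableSets_of_le_one, minorDet_empty]
  · rw [h.eq_chowPartial hdiag hn hnN]
    exact chowPartial_eq_gammaSum htri hdiag h.1
      (fun m hm hmN => h.eq_X_mul_chowPartial hdiag hm hmN) hn le_rfl hnN

end ChowFamily

/-- `γ(Hₙ[R]) = Σ_{S ⊆ [n-1], S∪{0} stable} det(R[S∪{n},{0}∪S]) t^{|S|}` (expanded
in the basis `tᵏ(1+t)^{n-1-2k}`); in particular if `R` is totally nonnegative, the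
γ-polynomial of `Hₙ[R]` has nonnegative coefficients. -/
theorem stmt13 (N : ℕ) (r : ℕ → ℕ → ℝ)
    (htri : ∀ n k, n < k → r n k = 0) (hdiag : ∀ n ≤ N, r n n = 1)
    (d H : ℕ → ℝ[X]) (hdH : ChowFamily N r d H) :
    (∀ n ≤ N, H n =
      ∑ S ∈ (Finset.Icc 1 (n - 1)).powerset.filter
          (fun S => ∀ i ∈ insert 0 S, i + 1 ∉ insert 0 S),
        C (minorDet r n S) * (X ^ S.card * (1 + X) ^ (n - 1 - 2 * S.card))) ∧
    (TotallyNonneg N r → ∀ n ≤ N, ∀ i : ℕ,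
      0 ≤ (∑ S ∈ (Finset.Icc 1 (n - 1)).powerset.filter
          (fun S => ∀ i ∈ insert 0 S, i + 1 ∉ insert 0 S),
        C (minorDet r n S) * X ^ S.card).coeff i) := by
  refine ⟨fun n hnN => hdH.eq_gammaSum htri hdiag hnN, fun hr n hnN i => ?_⟩
  rw [finsetSum_coeff]
  refine sum_nonneg fun S hS => ?_
  rw [coeff_C_mul_X_pow]
  split_ifs
  exacts [minorDet_nonneg hr hnN (mem_powerset.mp (mem_filter.mp hS).1), le_rfl]
end

section
/- Let f(z) = Σ_{n≥0} a_n z^n be a formal power series over an integral domain with a_0 = 1, and let d_n(t) be the Chow-derangement polynomials of the Toeplitz matrix (a_{n-k})_{n,k≥0}. Then Σ_{n≥0} d_n(t) z^n = (1-t)/(f(tz) - t·f(z)) = 1/(1 - Σ_{n≥2} a_n (t + t^2 + ... + t^{n-1}) z^n). -/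
/-!
Write `D = Σ dₙ zⁿ`. The product `D · f(z)` has coefficients `Hₙ`, and since each `d_k` is
palindromic of degree `≤ k`, the coefficients of `D · f(tz)` are
`Σ a_{n-k} t^{n-k} d_k = tⁿ Hₙ(1/t)`. The defining symmetry `tⁿ Hₙ(1/t) = t Hₙ` therefore kills
every coefficient of `D · (f(tz) - t f(z))` except the constant one, `1 - t`. The second identity
follows by cancelling `1 - t`, a non-zero-divisor in `A[t]`, from the factorisation
`f(tz) - t f(z) = (1 - t)(1 - Σ_{n≥2} aₙ (t + ⋯ + t^{n-1}) zⁿ)`.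
-/

open Polynomial

/-- `d` is the family of Chow-derangement polynomials of the Toeplitz matrix
`(a_{n-k})`: `d 0 = 1`, `tⁿ dₙ(1/t) = dₙ`, and `Hₙ = Σ_{k≤n} a_{n-k} d_k`
satisfies `tⁿ Hₙ(1/t) = t·Hₙ` for `n ≥ 1`. -/
def ToeplitzChowDer {A : Type*} [CommRing A] (a : ℕ → A) (d : ℕ → A[X]) : Prop :=
  d 0 = 1 ∧
  (∀ n, (d n).natDegree ≤ n) ∧
  (∀ n, reflect n (d n) = d n) ∧
  (∀ n, 1 ≤ n →
    reflect n (∑ k ∈ Finset.range (n + 1), C (a (n - k)) * d k) =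
      X * ∑ k ∈ Finset.range (n + 1), C (a (n - k)) * d k)

namespace Polynomial

theorem reflect_sum_s14 {R ι : Type*} [Semiring R] (s : Finset ι) (f : ι → R[X]) (N : ℕ) :
    reflect N (∑ i ∈ s, f i) = ∑ i ∈ s, reflect N (f i) :=
  map_sum (⟨⟨reflect N, reflect_zero⟩, fun f g => reflect_add f g N⟩ : R[X] →+ R[X]) f s

theorem reflect_of_natDegree_le {R : Type*} [Semiring R] {p : R[X]} {k n : ℕ} (hkn : k ≤ n)
    (hp : p.natDegree ≤ k) : reflect n p = X ^ (n - k) * reflect k p := by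
  calc reflect n p = reflect ((n - k) + k) (X ^ 0 * p) := by
        rw [Nat.sub_add_cancel hkn, pow_zero, one_mul]
    _ = X ^ (n - k) * reflect k p := by
      rw [reflect_mul _ _ ((natDegree_X_pow_le 0).trans (Nat.zero_le _)) hp, reflect_monomial,
        revAt_zero]

theorem isLeftRegular_one_sub_X {R : Type*} [CommRing R] : IsLeftRegular (1 - X : R[X]) :=
  fun p q h => (monic_X_sub_C (1 : R)).isRegular.left <| by
    simp only [map_one] at h ⊢
    linear_combination -h

end Polynomial

namespace PowerSeries

theorem eq_of_C_mul_eq_C_mul {R : Type*} [Semiring R] {r : R} (hr : IsLeftRegular r)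
    {f g : PowerSeries R} (h : C r * f = C r * g) : f = g :=
  ext fun n => hr <| by simpa only [coeff_C_mul] using congr(coeff n $h)

end PowerSeries

section Toeplitz

variable {A : Type*} [CommRing A] (a : ℕ → A) (d : ℕ → A[X])

noncomputable def toeplitzPartialSum (n : ℕ) : A[X] :=
  ∑ k ∈ Finset.range (n + 1), C (a (n - k)) * d k

theorem mk_mul_mk_C_eq_mk_toeplitzPartialSum :
    (PowerSeries.mk d * PowerSeries.mk fun n => C (a n)) =
      PowerSeries.mk (toeplitzPartialSum a d) := by
  ext n : 1
  rw [PowerSeries.coeff_mul, Finset.Nat.sum_antidiagonal_eq_sum_range_succ_mk]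
  simp only [PowerSeries.coeff_mk, toeplitzPartialSum, mul_comm]

theorem mk_mul_mk_C_mul_X_pow_eq_mk_reflect (hdeg : ∀ n, (d n).natDegree ≤ n)
    (hrefl : ∀ n, reflect n (d n) = d n) :
    (PowerSeries.mk d * PowerSeries.mk fun n => C (a n) * X ^ n) =
      PowerSeries.mk fun n => reflect n (toeplitzPartialSum a d n) := by
  ext n : 1
  rw [PowerSeries.coeff_mul, Finset.Nat.sum_antidiagonal_eq_sum_range_succ_mk]
  simp only [PowerSeries.coeff_mk, toeplitzPartialSum, reflect_sum_s14, reflect_C_mul]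
  refine Finset.sum_congr rfl fun k hk => ?_
  rw [reflect_of_natDegree_le (Finset.mem_range_succ_iff.mp hk) (hdeg k), hrefl k]
  ring

theorem ToeplitzChowDer.mk_mul_eq_C_one_sub_X (ha : a 0 = 1) (hd : ToeplitzChowDer a d) :
    (PowerSeries.mk d *
        (PowerSeries.mk (fun n => C (a n) * X ^ n) -
          PowerSeries.C X * PowerSeries.mk fun n => C (a n))) =
      PowerSeries.C (1 - X) := by
  obtain ⟨hd0, hdeg, hrefl, hH⟩ := hd
  rw [mul_sub, mul_left_comm, mk_mul_mk_C_mul_X_pow_eq_mk_reflect a d hdeg hrefl,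
    mk_mul_mk_C_eq_mk_toeplitzPartialSum]
  ext n : 1
  simp only [map_sub, PowerSeries.coeff_mk, PowerSeries.coeff_C_mul, PowerSeries.coeff_C]
  rcases Nat.eq_zero_or_pos n with rfl | hn
  · simp [toeplitzPartialSum, ha, hd0]
  · rw [if_neg hn.ne', if_neg hn.ne', sub_self, sub_eq_zero]
    exact hH n hn

theorem mk_C_mul_X_pow_sub_C_X_mul_mk_C (ha : a 0 = 1) :
    (PowerSeries.mk (fun n => C (a n) * X ^ n) -
        PowerSeries.C X * PowerSeries.mk fun n => C (a n)) =
      PowerSeries.C (1 - X) *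
        (1 - PowerSeries.mk fun n =>
          if 2 ≤ n then C (a n) * ∑ j ∈ Finset.Icc 1 (n - 1), X ^ j else 0) := by
  ext n : 1
  rw [PowerSeries.coeff_C_mul]
  simp only [map_sub, PowerSeries.coeff_mk, PowerSeries.coeff_C_mul, PowerSeries.coeff_one]
  rcases Nat.lt_or_ge n 2 with hn | hn
  · interval_cases n <;> simp [ha]
  obtain ⟨m, rfl⟩ : ∃ m, n = m + 1 := ⟨n - 1, by omega⟩
  simp only [if_pos hn, m.add_one_ne_zero, if_false, Nat.add_sub_cancel,
    ← Finset.Ico_add_one_right_eq_Icc]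
  linear_combination C (a (m + 1)) * geom_sum_Ico_mul_neg (X : A[X]) (by omega : 1 ≤ m + 1)

end Toeplitz

theorem stmt14_general {A : Type*} [CommRing A] (a : ℕ → A) (ha : a 0 = 1)
    (d : ℕ → A[X]) (hd : ToeplitzChowDer a d) :
    (PowerSeries.mk fun n => d n) *
        (PowerSeries.mk (fun n => C (a n) * X ^ n) -
          PowerSeries.C (R := A[X]) X * PowerSeries.mk fun n => C (a n)) =
      PowerSeries.C (R := A[X]) (1 - X) ∧
    (PowerSeries.mk fun n => d n) *
        (1 - PowerSeries.mk fun n =>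
          if 2 ≤ n then C (a n) * ∑ j ∈ Finset.Icc 1 (n - 1), X ^ j else 0) = 1 := by
  have h := hd.mk_mul_eq_C_one_sub_X a d ha
  refine ⟨h, PowerSeries.eq_of_C_mul_eq_C_mul isLeftRegular_one_sub_X ?_⟩
  rw [mk_C_mul_X_pow_sub_C_X_mul_mk_C a ha, mul_left_comm] at h
  rw [h, mul_one]

/-- `Σ dₙ(t) zⁿ = (1-t)/(f(tz) - t f(z)) = 1/(1 - Σ_{n≥2} aₙ(t + ⋯ + t^{n-1})zⁿ)`,
stated multiplicatively in `R[t][[z]]`. -/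
theorem stmt14 {A : Type*} [CommRing A] [IsDomain A] (a : ℕ → A) (ha : a 0 = 1)
    (d : ℕ → A[X]) (hd : ToeplitzChowDer a d) :
    (PowerSeries.mk fun n => d n) *
        (PowerSeries.mk (fun n => C (a n) * X ^ n) -
          PowerSeries.C (R := A[X]) X * PowerSeries.mk fun n => C (a n)) =
      PowerSeries.C (R := A[X]) (1 - X) ∧
    (PowerSeries.mk fun n => d n) *
        (1 - PowerSeries.mk fun n =>
          if 2 ≤ n then C (a n) * ∑ j ∈ Finset.Icc 1 (n - 1), X ^ j else 0) = 1 :=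
  stmt14_general a ha d hd
end
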